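/- arXiv:2007.14539 — 2 statements merged into one kernel-verified Lean document; each statement's English description precedes it below -/
import Mathlib

section
/- Fix A ∈ ℝ^{m×n}, y ∈ ℝ^m, λ > 0 and a set U ⊆ [n]. Let x̆ be an optimal solution of the restricted program min { nll(x; A, y) + λ‖x‖₁ : x ∈ ℝⁿ, supp(x) ⊆ U }. (a) There exists z̆_U ∈ ℝ^U with ‖z̆_U‖_∞ ≤ 1 such that −λ·z̆_U = (1/m)·A_Uᵀ·(E[Z_{A,x̆}] − y). (b) Extend z̆ to ℝⁿ by defining −λ·z̆_{U^c} = (1/m)·A_{U^c}ᵀ·(E[Z_{A,x̆}] − y). If ‖z̆_{U^c}‖_∞ < 1 and A_Uᵀ A_U is invertible, then x̆ is the unique optimal solution of the unrestricted program min_{x ∈ ℝⁿ} nll(x; A, y) + λ‖x‖₁. -/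
/-!
The per-sample loss `t ↦ (t - y)²/2 + log ∫_S e^{-(t-z)²/2} dz` is, up to an affine function of
`t`, the cumulant generating function of `N(0,1)` restricted to `S`, whose exponential tilts are
exactly the truncated normals `N(t,1;S)`. Its derivative is therefore `μ_t - y` and its second
derivative is `Var(Z_t) > 0` (a truncated normal has no atoms), so `nll` is convex with gradient
`(1/m) Aᵀ(E[Z_{A,x}] - y)`, strictly so in every direction that changes `Ax`.

Minimality of `x̆` along each coordinate of `U` gives `|∂_i nll(x̆)| ≤ λ`, i.e. the dual vector
`z̆_U`. When `|z̆_i| < 1` off `U`, the tangent inequality for `nll` and the subgradient inequality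
for `λ‖·‖₁` make `x̆` a global minimiser; another minimiser must then have the same `Ax` and vanish
off `U`, hence agree with `x̆` because `A_Uᵀ A_U` is invertible.
-/

open MeasureTheory ProbabilityTheory Real Filter Topology

noncomputable section

/-- Euclidean dot product on `Fin n → ℝ`. -/
def dot {n : ℕ} (a b : Fin n → ℝ) : ℝ := ∑ i, a i * b i

/-- Euclidean (ℓ²) norm on `Fin n → ℝ`. -/
def norm2 {n : ℕ} (v : Fin n → ℝ) : ℝ := Real.sqrt (∑ i, (v i) ^ 2)

/-- ℓ¹ norm on `Fin n → ℝ`. -/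
def norm1 {n : ℕ} (v : Fin n → ℝ) : ℝ := ∑ i, |v i|

/-- Support of a vector, as a finset. -/
def spt {n : ℕ} (v : Fin n → ℝ) : Finset (Fin n) := Finset.univ.filter fun i => v i ≠ 0

/-- Standard Gaussian measure `N(0, I_n)` on `Fin n → ℝ`. -/
def stdGaussianPi (n : ℕ) : Measure (Fin n → ℝ) := Measure.pi fun _ => gaussianReal 0 1

/-- Survival probability `γ_S(t) = Pr[Z + t ∈ S]`, `Z ~ N(0,1)`. -/
def gammaS (S : Set ℝ) (t : ℝ) : ℝ := (gaussianReal t 1 S).toReal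

/-- Truncated normal `N(t, 1; S)`. -/
def truncNormal (S : Set ℝ) (t : ℝ) : Measure ℝ := (gaussianReal t 1)[|S]

/-- `μ_t`, the mean of `N(t,1;S)`. -/
def truncMean (S : Set ℝ) (t : ℝ) : ℝ := ∫ z, z ∂(truncNormal S t)

/-- `Var(Z_t)`, the variance of `N(t,1;S)`. -/
def truncVar (S : Set ℝ) (t : ℝ) : ℝ := variance id (truncNormal S t)

/-- Constant survival probability assumption: `E_{a ~ N(0,I_n)}[γ_S(aᵀ x*)] ≥ α`. -/
def CSP (n : ℕ) (xstar : Fin n → ℝ) (S : Set ℝ) (α : ℝ) : Prop :=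
  α ≤ ∫ a, gammaS S (dot a xstar) ∂(stdGaussianPi n)

/-- `m` i.i.d. untruncated samples `(a_j, η_j)`, `a_j ~ N(0,I_n)`, `η_j ~ N(0,1)`. -/
def rawMeasure (m n : ℕ) : Measure (Fin m → (Fin n → ℝ) × ℝ) :=
  Measure.pi fun _ => (stdGaussianPi n).prod (gaussianReal 0 1)

/-- The law of `m` truncated samples: condition the `m` i.i.d. pairs `(a_j, η_j)` on all
responses `a_jᵀ x* + η_j` lying in `S`.  (Equivalently, each sample is i.i.d. from the
law of `(a, aᵀx* + η)` conditioned on `aᵀx* + η ∈ S`.) -/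
def dataMeasure (m n : ℕ) (xstar : Fin n → ℝ) (S : Set ℝ) :
    Measure (Fin m → (Fin n → ℝ) × ℝ) :=
  (rawMeasure m n)[|{ω | ∀ j, dot (ω j).1 xstar + (ω j).2 ∈ S}]

/-- The design matrix `A` (rows `A_j`) of a data set. -/
def mat {m n : ℕ} (ω : Fin m → (Fin n → ℝ) × ℝ) : Fin m → Fin n → ℝ := fun j => (ω j).1

/-- The response vector `y`, `y_j = A_jᵀ x* + η_j`. -/
def yvec {m n : ℕ} (xstar : Fin n → ℝ) (ω : Fin m → (Fin n → ℝ) × ℝ) : Fin m → ℝ :=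
  fun j => dot (ω j).1 xstar + (ω j).2

/-- Truncated negative log-likelihood. -/
def nll (S : Set ℝ) {m n : ℕ} (A : Fin m → Fin n → ℝ) (y : Fin m → ℝ) (x : Fin n → ℝ) : ℝ :=
  (1 / (m : ℝ)) * ∑ j, ((dot (A j) x - y j) ^ 2 / 2
    + Real.log (∫ z in S, Real.exp (-(dot (A j) x - z) ^ 2 / 2)))

lemma gaussianPDFReal_one_eq (t z : ℝ) :
    gaussianPDFReal t 1 z = gaussianPDFReal 0 1 z * (exp (t * z) / exp (t ^ 2 / 2)) := by
  simp only [gaussianPDFReal, NNReal.coe_one, mul_one, sub_zero, ← exp_sub, mul_assoc, ← exp_add]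
  ring_nf

lemma gaussianReal_eq_tilted (t : ℝ) : gaussianReal t 1 = (gaussianReal 0 1).tilted (t * ·) := by
  have hmgf : ∫ z, exp (t * z) ∂gaussianReal 0 1 = exp (t ^ 2 / 2) := by
    simpa [mgf] using congrFun (mgf_id_gaussianReal (μ := 0) (v := 1)) t
  rw [Measure.tilted, hmgf, gaussianReal_of_var_ne_zero _ one_ne_zero,
    gaussianReal_of_var_ne_zero _ one_ne_zero,
    ← withDensity_mul _ (measurable_gaussianPDF _ _) (by fun_prop)]
  congr 1
  funext z
  rw [Pi.mul_apply, gaussianPDF, gaussianPDF, ← ENNReal.ofReal_mul (gaussianPDFReal_nonneg _ _ _),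
    gaussianPDFReal_one_eq]

lemma cond_tilted {α : Type*} [MeasurableSpace α] {μ : Measure α} {f : α → ℝ} {s : Set α}
    (hs : MeasurableSet s) (hf : Integrable (fun x => exp (f x)) μ) (hμs : μ s ≠ 0) :
    (μ.tilted f)[|s] = (μ.restrict s).tilted f := by
  have : NeZero μ := ⟨fun h => hμs (by simp [h])⟩
  have : NeZero (μ.restrict s) := ⟨by simpa using hμs⟩
  have hZ := integral_exp_pos hf
  have hZs := integral_exp_pos hf.restrict (μ := μ.restrict s)
  ext A hA
  rw [cond_apply hs, tilted_apply_eq_ofReal_integral' _ hs,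
    tilted_apply_eq_ofReal_integral' _ (hs.inter hA), tilted_apply_eq_ofReal_integral' _ hA,
    Measure.restrict_restrict hA, Set.inter_comm, integral_div, integral_div, integral_div,
    ← ENNReal.ofReal_inv_of_pos (by positivity), ← ENNReal.ofReal_mul (by positivity)]
  congr 1
  field_simp

lemma variance_id_pos {μ : Measure ℝ} [IsProbabilityMeasure μ] [NullSingletonClass μ]
    (hμ : MemLp id 2 μ) : 0 < Var[id; μ] := by
  refine (variance_nonneg _ _).lt_of_ne' fun h => ?_
  obtain ⟨x, hx, hne⟩ := ((ae_eq_integral_of_variance_eq_zero hμ h).and (μ.ae_ne μ[id])).exists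
  exact hne hx

lemma StrictMono.add_mul_sub_lt_of_hasDerivAt {f f' : ℝ → ℝ} (hf : ∀ t, HasDerivAt f (f' t) t)
    (hf' : StrictMono f') {a b : ℝ} (hab : a ≠ b) : f a + f' a * (b - a) < f b := by
  have hcont : Continuous f := continuous_iff_continuousAt.2 fun t => (hf t).continuousAt
  rcases hab.lt_or_gt with h | h
  · obtain ⟨c, hc, hslope⟩ :=
      exists_hasDerivAt_eq_slope f f' h hcont.continuousOn fun t _ => hf t
    rw [eq_div_iff (sub_ne_zero.2 h.ne')] at hslope
    nlinarith [hf' hc.1]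
  · obtain ⟨c, hc, hslope⟩ :=
      exists_hasDerivAt_eq_slope f f' h hcont.continuousOn fun t _ => hf t
    rw [eq_div_iff (sub_ne_zero.2 h.ne')] at hslope
    nlinarith [hf' hc.2]

lemma subgradient_abs_of_forall_le {f : ℝ → ℝ} {d a lam : ℝ} (hf : HasDerivAt f d a)
    (hlam : 0 ≤ lam) (hmin : ∀ w, f a + lam * |a| ≤ f w + lam * |w|) (w : ℝ) :
    0 ≤ d * (w - a) + lam * (|w| - |a|) := by
  have hline : HasDerivAt (fun s => f (a + s * (w - a))) (d * (w - a)) 0 := by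
    have hl : HasDerivAt (fun s : ℝ => a + s * (w - a)) (w - a) 0 := by
      simpa using ((hasDerivAt_id (0 : ℝ)).mul_const (w - a)).const_add a
    exact (show HasDerivAt f d (a + 0 * (w - a)) by simpa using hf).comp 0 hl
  suffices -(lam * (|w| - |a|)) ≤ d * (w - a) by linarith
  refine ge_of_tendsto hline.tendsto_slope_zero_right ?_
  filter_upwards [Ioo_mem_nhdsGT one_pos] with s hs
  have hconv : |a + s * (w - a)| ≤ (1 - s) * |a| + s * |w| := by
    calc |a + s * (w - a)| = |(1 - s) * a + s * w| := by ring_nf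
      _ ≤ |(1 - s) * a| + |s * w| := abs_add_le _ _
      _ = (1 - s) * |a| + s * |w| := by
        rw [abs_mul, abs_mul, abs_of_pos (sub_pos.2 hs.2), abs_of_pos hs.1]
  have := hmin (a + s * (w - a))
  rw [smul_eq_mul, zero_add, zero_mul, add_zero, le_inv_mul_iff₀ hs.1]
  nlinarith

lemma abs_le_of_subgradient_abs {d a lam : ℝ} (hlam : 0 ≤ lam)
    (h : ∀ w, 0 ≤ d * (w - a) + lam * (|w| - |a|)) : |d| ≤ lam := by
  have h₁ := h (a + 1)
  have h₂ := h (a - 1)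
  have : |a + 1| ≤ |a| + 1 := (abs_add_le a 1).trans_eq (by norm_num)
  have : |a - 1| ≤ |a| + 1 := (abs_sub a 1).trans_eq (by norm_num)
  rw [abs_le]
  constructor <;> nlinarith

lemma mul_add_mul_abs_nonneg {d lam : ℝ} (hd : |d| ≤ lam) (w : ℝ) : 0 ≤ d * w + lam * |w| := by
  nlinarith [neg_abs_le (d * w), abs_mul d w, abs_nonneg w]

lemma mul_add_mul_abs_pos {d lam w : ℝ} (hd : |d| < lam) (hw : w ≠ 0) : 0 < d * w + lam * |w| := by
  nlinarith [neg_abs_le (d * w), abs_mul d w, abs_pos.2 hw]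

section TruncatedNormal

variable {S : Set ℝ}

lemma gaussianReal_apply_ne_zero (hS0 : volume S ≠ 0) (t : ℝ) : gaussianReal t 1 S ≠ 0 :=
  fun h => hS0 (gaussianReal_absolutelyContinuous' t one_ne_zero h)

lemma mem_interior_integrableExpSet_restrict_gaussianReal (t : ℝ) :
    t ∈ interior (integrableExpSet id ((gaussianReal 0 1).restrict S)) := by
  have : integrableExpSet id ((gaussianReal 0 1).restrict S) = Set.univ :=
    Set.eq_univ_of_forall fun t => (integrable_exp_mul_gaussianReal t).restrict
  simp [this]

lemma truncNormal_eq_tilted (hS : MeasurableSet S) (hS0 : volume S ≠ 0) (t : ℝ) :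
    truncNormal S t = ((gaussianReal 0 1).restrict S).tilted (t * ·) := by
  rw [truncNormal, gaussianReal_eq_tilted]
  exact cond_tilted hS (integrable_exp_mul_gaussianReal t) (gaussianReal_apply_ne_zero hS0 0)

lemma truncMean_eq_deriv_cgf (hS : MeasurableSet S) (hS0 : volume S ≠ 0) :
    truncMean S = deriv (cgf id ((gaussianReal 0 1).restrict S)) := by
  funext t
  rw [truncMean, truncNormal_eq_tilted hS hS0]
  exact integral_tilted_mul_self (mem_interior_integrableExpSet_restrict_gaussianReal t)

lemma hasDerivAt_truncMean (hS : MeasurableSet S) (hS0 : volume S ≠ 0) (t : ℝ) :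
    HasDerivAt (truncMean S) (truncVar S t) t := by
  have ht := mem_interior_integrableExpSet_restrict_gaussianReal (S := S) t
  have hvar : truncVar S t = iteratedDeriv 2 (cgf id ((gaussianReal 0 1).restrict S)) t := by
    rw [truncVar, truncNormal_eq_tilted hS hS0]
    exact variance_tilted_mul ht
  rw [hvar, iteratedDeriv_succ, iteratedDeriv_one, truncMean_eq_deriv_cgf hS hS0]
  exact (analyticAt_cgf ht).deriv.differentiableAt.hasDerivAt

lemma truncVar_pos (hS : MeasurableSet S) (hS0 : volume S ≠ 0) (t : ℝ) : 0 < truncVar S t := by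
  have : IsProbabilityMeasure (truncNormal S t) :=
    cond_isProbabilityMeasure (gaussianReal_apply_ne_zero hS0 t)
  have := nullSingletonClass_gaussianReal (μ := t) one_ne_zero
  have : NullSingletonClass (truncNormal S t) :=
    ⟨fun x => cond_absolutelyContinuous (measure_singleton x)⟩
  refine variance_id_pos ?_
  rw [truncNormal_eq_tilted hS hS0]
  exact memLp_tilted_mul (mem_interior_integrableExpSet_restrict_gaussianReal t) 2

lemma strictMono_truncMean (hS : MeasurableSet S) (hS0 : volume S ≠ 0) :
    StrictMono (truncMean S) :=
  strictMono_of_hasDerivAt_pos (hasDerivAt_truncMean hS hS0) (truncVar_pos hS hS0)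

end TruncatedNormal

section TruncatedLoss

variable {S : Set ℝ}

lemma setIntegral_exp_neg_sq_sub (t : ℝ) :
    ∫ z in S, exp (-(t - z) ^ 2 / 2)
      = √(2 * π) * (mgf id ((gaussianReal 0 1).restrict S) t / exp (t ^ 2 / 2)) := by
  have hpdf (z : ℝ) : exp (-(t - z) ^ 2 / 2) = √(2 * π) * gaussianPDFReal t 1 z := by
    rw [gaussianPDFReal, NNReal.coe_one, mul_one, ← mul_assoc, mul_inv_cancel₀ (by positivity),
      one_mul]
    ring_nf
  have hmgf : ∫ z, exp (t * z) ∂gaussianReal 0 1 = exp (t ^ 2 / 2) := by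
    simpa [mgf] using congrFun (mgf_id_gaussianReal (μ := 0) (v := 1)) t
  have hreal := congrArg ENNReal.toReal (gaussianReal_apply_eq_integral t one_ne_zero S)
  rw [gaussianReal_eq_tilted, tilted_apply_eq_ofReal_integral, hmgf, integral_div,
    ENNReal.toReal_ofReal (by positivity),
    ENNReal.toReal_ofReal (integral_nonneg fun z => gaussianPDFReal_nonneg t 1 z)] at hreal
  simp_rw [hpdf]
  rw [integral_const_mul, ← hreal]
  rfl

def truncLoss (S : Set ℝ) (y t : ℝ) : ℝ :=
  (t - y) ^ 2 / 2 + log (∫ z in S, exp (-(t - z) ^ 2 / 2))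

lemma truncLoss_eq_cgf (hS0 : volume S ≠ 0) (y : ℝ) :
    truncLoss S y = fun t =>
      y ^ 2 / 2 - t * y + log √(2 * π) + cgf id ((gaussianReal 0 1).restrict S) t := by
  have hν : (gaussianReal 0 1).restrict S ≠ 0 := by
    simpa [Measure.restrict_eq_zero] using gaussianReal_apply_ne_zero hS0 0
  funext t
  have hmgf : 0 < mgf id _ t := mgf_pos' hν (integrable_exp_mul_gaussianReal t).restrict
  rw [truncLoss, setIntegral_exp_neg_sq_sub, log_mul (by positivity) (by positivity),
    log_div hmgf.ne' (exp_pos _).ne', log_exp, cgf]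
  ring

lemma hasDerivAt_truncLoss (hS : MeasurableSet S) (hS0 : volume S ≠ 0) (y t : ℝ) :
    HasDerivAt (truncLoss S y) (truncMean S t - y) t := by
  have hcgf := (analyticAt_cgf (mem_interior_integrableExpSet_restrict_gaussianReal (S := S) t)
    ).differentiableAt.hasDerivAt
  rw [truncLoss_eq_cgf hS0, truncMean_eq_deriv_cgf hS hS0]
  exact ((((hasDerivAt_id t).mul_const y).const_sub (y ^ 2 / 2)).add_const
    (log √(2 * π))).fun_add hcgf |>.congr_deriv (by ring)

lemma truncLoss_tangent_lt (hS : MeasurableSet S) (hS0 : volume S ≠ 0) (y : ℝ)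
    {a b : ℝ} (hab : a ≠ b) : truncLoss S y a + (truncMean S a - y) * (b - a) < truncLoss S y b :=
  StrictMono.add_mul_sub_lt_of_hasDerivAt (hasDerivAt_truncLoss hS hS0 y)
    (fun _ _ h => sub_lt_sub_right (strictMono_truncMean hS hS0 h) y) hab

lemma truncLoss_tangent_le (hS : MeasurableSet S) (hS0 : volume S ≠ 0) (y a b : ℝ) :
    truncLoss S y a + (truncMean S a - y) * (b - a) ≤ truncLoss S y b := by
  rcases eq_or_ne a b with rfl | hab
  · simp
  · exact (truncLoss_tangent_lt hS hS0 y hab).le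

end TruncatedLoss

lemma mem_spt {n : ℕ} {v : Fin n → ℝ} {i : Fin n} : i ∈ spt v ↔ v i ≠ 0 := by
  simp [spt]

lemma dot_update {n : ℕ} (v x : Fin n → ℝ) (i : Fin n) (w : ℝ) :
    dot v (Function.update x i w) = dot v x + v i * (w - x i) := by
  rw [dot, dot, funext (Function.apply_update (fun k t => v k * t) x i w),
    Finset.sum_update_of_mem (Finset.mem_univ i),
    Finset.sum_eq_add_sum_sdiff_singleton_of_mem (Finset.mem_univ i)]
  ring

lemma norm1_update {n : ℕ} (x : Fin n → ℝ) (i : Fin n) (w : ℝ) :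
    norm1 (Function.update x i w) = norm1 x - |x i| + |w| := by
  rw [norm1, norm1, funext (Function.apply_update (fun _ t => |t|) x i w),
    Finset.sum_update_of_mem (Finset.mem_univ i),
    Finset.sum_eq_add_sum_sdiff_singleton_of_mem (Finset.mem_univ i)]
  ring

lemma eq_of_isUnit_gram {m n : ℕ} {A : Fin m → Fin n → ℝ} {U : Finset (Fin n)}
    (hunit : IsUnit (Matrix.of fun i i' : U => ∑ j, A j (i : Fin n) * A j (i' : Fin n)))
    {x x' : Fin n → ℝ} (hx : ∀ i ∉ U, x i = 0) (hx' : ∀ i ∉ U, x' i = 0)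
    (hA : ∀ j, dot (A j) x = dot (A j) x') : x = x' := by
  set B : Matrix (Fin m) U ℝ := Matrix.of fun j i => A j i
  have hgram :
      (Matrix.of fun i i' : U => ∑ j, A j (i : Fin n) * A j (i' : Fin n)) = B.transpose * B := by
    ext i i'
    simp [B, Matrix.mul_apply]
  have hBw : B.mulVec (fun i : U => x i - x' i) = 0 := by
    funext j
    have hsum : ∑ i : U, A j i * (x i - x' i) = ∑ i, A j i * (x i - x' i) := by
      rw [Finset.sum_coe_sort U (fun i => A j i * (x i - x' i))]
      exact Finset.sum_subset (Finset.subset_univ U) fun i _ hi => by simp [hx i hi, hx' i hi]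
    change ∑ i : U, A j i * (x i - x' i) = 0
    rw [hsum, ← sub_eq_zero.2 (hA j), dot, dot, ← Finset.sum_sub_distrib]
    simp only [mul_sub]
  have hw : (fun i : U => x i - x' i) = 0 := Matrix.mulVec_injective_iff_isUnit.2 hunit <| by
    rw [hgram, ← Matrix.mulVec_mulVec, hBw, Matrix.mulVec_zero, Matrix.mulVec_zero]
  funext i
  by_cases hi : i ∈ U
  · exact sub_eq_zero.1 (congrFun hw ⟨i, hi⟩)
  · rw [hx i hi, hx' i hi]

lemma sum_mul_sub_add_mul_abs_sub {n : ℕ} (g x x' : Fin n → ℝ) (lam : ℝ) :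
    ∑ i, (g i * (x i - x' i) + lam * (|x i| - |x' i|))
      = ∑ i, g i * (x i - x' i) + lam * (norm1 x - norm1 x') := by
  rw [Finset.sum_add_distrib, ← Finset.mul_sum, norm1, norm1, Finset.sum_sub_distrib]

section NegLogLikelihood

variable {S : Set ℝ} {m n : ℕ} (A : Fin m → Fin n → ℝ) (y : Fin m → ℝ)

def nllGrad (S : Set ℝ) (A : Fin m → Fin n → ℝ) (y : Fin m → ℝ) (x : Fin n → ℝ) (i : Fin n) : ℝ :=
  (1 / (m : ℝ)) * ∑ j, A j i * (truncMean S (dot (A j) x) - y j)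

lemma nll_eq_sum_truncLoss (x : Fin n → ℝ) :
    nll S A y x = (1 / (m : ℝ)) * ∑ j, truncLoss S (y j) (dot (A j) x) := rfl

lemma hasDerivAt_nll_update (hS : MeasurableSet S) (hS0 : volume S ≠ 0) (x : Fin n → ℝ)
    (i : Fin n) :
    HasDerivAt (fun w => nll S A y (Function.update x i w)) (nllGrad S A y x i) (x i) := by
  simp only [nll_eq_sum_truncLoss, dot_update]
  refine (HasDerivAt.fun_sum fun j _ => ?_).const_mul _
  have hline : HasDerivAt (fun w => dot (A j) x + A j i * (w - x i)) (A j i) (x i) := by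
    simpa using ((hasDerivAt_id (x i)).sub_const (x i)).const_mul (A j i) |>.const_add (dot (A j) x)
  exact (HasDerivAt.comp_of_eq (x i) (hasDerivAt_truncLoss hS hS0 (y j) (dot (A j) x)) hline
    (by simp)).congr_deriv (mul_comm _ _)

lemma sum_nllGrad_mul_sub (x x' : Fin n → ℝ) :
    ∑ i, nllGrad S A y x' i * (x i - x' i)
      = (1 / (m : ℝ)) * ∑ j, (truncMean S (dot (A j) x') - y j) * (dot (A j) x - dot (A j) x') := by
  simp only [nllGrad, dot, mul_assoc, ← Finset.mul_sum, Finset.sum_mul, ← Finset.sum_sub_distrib]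
  rw [Finset.sum_comm]
  congr 1
  refine Finset.sum_congr rfl fun j _ => ?_
  rw [Finset.mul_sum]
  refine Finset.sum_congr rfl fun i _ => ?_
  ring

lemma nll_add_sum_nllGrad_mul_sub_le (hS : MeasurableSet S) (hS0 : volume S ≠ 0)
    (x x' : Fin n → ℝ) : nll S A y x' + ∑ i, nllGrad S A y x' i * (x i - x' i) ≤ nll S A y x := by
  rw [sum_nllGrad_mul_sub, nll_eq_sum_truncLoss, nll_eq_sum_truncLoss, ← mul_add,
    ← Finset.sum_add_distrib]
  gcongr with j
  exact truncLoss_tangent_le hS hS0 _ _ _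

lemma nll_add_sum_nllGrad_mul_sub_lt (hS : MeasurableSet S) (hS0 : volume S ≠ 0)
    {x x' : Fin n → ℝ} (hA : ∃ j, dot (A j) x ≠ dot (A j) x') :
    nll S A y x' + ∑ i, nllGrad S A y x' i * (x i - x' i) < nll S A y x := by
  obtain ⟨j, hj⟩ := hA
  have hm : (0 : ℝ) < m := by exact_mod_cast j.pos
  rw [sum_nllGrad_mul_sub, nll_eq_sum_truncLoss, nll_eq_sum_truncLoss, ← mul_add,
    ← Finset.sum_add_distrib]
  refine mul_lt_mul_of_pos_left (Finset.sum_lt_sum (fun j _ => ?_) ⟨j, Finset.mem_univ j, ?_⟩)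
    (by positivity)
  · exact truncLoss_tangent_le hS hS0 _ _ _
  · exact truncLoss_tangent_lt hS hS0 _ hj.symm

lemma subgradient_of_isMinOn_support (hS : MeasurableSet S) (hS0 : volume S ≠ 0) {lam : ℝ}
    (hlam : 0 ≤ lam) {U : Finset (Fin n)} {xb : Fin n → ℝ} (hsupp : spt xb ⊆ U)
    (hopt : IsMinOn (fun x => nll S A y x + lam * norm1 x) {x | spt x ⊆ U} xb)
    (i : Fin n) (hi : i ∈ U) (w : ℝ) :
    0 ≤ nllGrad S A y xb i * (w - xb i) + lam * (|w| - |xb i|) := by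
  refine subgradient_abs_of_forall_le (hasDerivAt_nll_update A y hS hS0 xb i) hlam (fun w => ?_) w
  have hmem : Function.update xb i w ∈ {x | spt x ⊆ U} := by
    intro k hk
    rcases eq_or_ne k i with rfl | hki
    · exact hi
    · exact hsupp (mem_spt.2 (by simpa [Function.update_of_ne hki] using mem_spt.1 hk))
  have := isMinOn_iff.1 hopt _ hmem
  simp only [Function.update_eq_self, norm1_update] at this ⊢
  linarith

lemma isMinOn_univ_of_subgradient (hS : MeasurableSet S) (hS0 : volume S ≠ 0) {lam : ℝ}
    {xb : Fin n → ℝ} (hsub : ∀ i w, 0 ≤ nllGrad S A y xb i * (w - xb i) + lam * (|w| - |xb i|)) :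
    IsMinOn (fun x => nll S A y x + lam * norm1 x) Set.univ xb := by
  refine isMinOn_iff.2 fun x _ => ?_
  have := nll_add_sum_nllGrad_mul_sub_le A y hS hS0 x xb
  have := Finset.sum_nonneg fun i (_ : i ∈ Finset.univ) => hsub i (x i)
  rw [sum_mul_sub_add_mul_abs_sub] at this
  linarith

lemma eq_of_objective_le (hS : MeasurableSet S) (hS0 : volume S ≠ 0) {lam : ℝ}
    {U : Finset (Fin n)}
    (hunit : IsUnit (Matrix.of fun i i' : U => ∑ j, A j (i : Fin n) * A j (i' : Fin n)))
    {xb xhat : Fin n → ℝ} (hxb : ∀ i ∉ U, xb i = 0)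
    (hsub : ∀ i w, 0 ≤ nllGrad S A y xb i * (w - xb i) + lam * (|w| - |xb i|))
    (hlt : ∀ i ∉ U, |nllGrad S A y xb i| < lam)
    (hle : nll S A y xhat + lam * norm1 xhat ≤ nll S A y xb + lam * norm1 xb) : xhat = xb := by
  have hsum := sum_mul_sub_add_mul_abs_sub (nllGrad S A y xb) xhat xb lam
  have hnonneg := Finset.sum_nonneg fun i (_ : i ∈ Finset.univ) => hsub i (xhat i)
  have hA : ∀ j, dot (A j) xhat = dot (A j) xb := by
    by_contra! h
    linarith [nll_add_sum_nllGrad_mul_sub_lt A y hS hS0 h]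
  have hzero : ∀ i ∉ U, xhat i = 0 := by
    intro i hi
    by_contra hne
    have hpos : 0 < nllGrad S A y xb i * (xhat i - xb i) + lam * (|xhat i| - |xb i|) := by
      simpa [hxb i hi] using mul_add_mul_abs_pos (hlt i hi) hne
    linarith [nll_add_sum_nllGrad_mul_sub_le A y hS hS0 xhat xb,
      Finset.sum_pos' (fun i (_ : i ∈ Finset.univ) => hsub i (xhat i)) ⟨i, Finset.mem_univ i, hpos⟩]
  exact eq_of_isUnit_gram hunit hzero hxb hA

end NegLogLikelihood

/-- the primal-dual witness construction (Lemma `pdw`). -/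
theorem primal_dual_witness {m n : ℕ} (S : Set ℝ) (hS : MeasurableSet S)
    (hpos : ∀ t : ℝ, 0 < ∫ z in S, Real.exp (-(t - z) ^ 2 / 2))
    (A : Fin m → Fin n → ℝ) (y : Fin m → ℝ) (lam : ℝ) (hlam : 0 < lam)
    (U : Finset (Fin n)) (xb : Fin n → ℝ) (hsupp : spt xb ⊆ U)
    (hopt : IsMinOn (fun x => nll S A y x + lam * norm1 x) {x | spt x ⊆ U} xb) :
    -- (a)
    (∃ z : Fin n → ℝ, (∀ i ∈ U, |z i| ≤ 1) ∧
      ∀ i ∈ U, -lam * z i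
        = (1 / (m : ℝ)) * ∑ j, A j i * (truncMean S (dot (A j) xb) - y j)) ∧
    -- (b); `z̆` is extended to `U^c` by `z̆_i = −(1/(λm)) Σ_j A_{ji}(E[Z_{A_j,x̆}] − y_j)`
    ((∀ i ∉ U,
        |(-(1 / (lam * m)) * ∑ j, A j i * (truncMean S (dot (A j) xb) - y j))| < 1) →
      IsUnit (Matrix.of fun i i' : U => ∑ j, A j (i : Fin n) * A j (i' : Fin n)) →
      IsMinOn (fun x => nll S A y x + lam * norm1 x) Set.univ xb ∧
        ∀ xhat : Fin n → ℝ,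
          IsMinOn (fun x => nll S A y x + lam * norm1 x) Set.univ xhat → xhat = xb) := by
  have hS0 : volume S ≠ 0 := fun h => (hpos 0).ne' (by simp [Measure.restrict_eq_zero.2 h])
  have hsubU := subgradient_of_isMinOn_support A y hS hS0 hlam.le hsupp hopt
  refine ⟨⟨fun i => -nllGrad S A y xb i / lam, fun i hi => ?_, fun i _ => ?_⟩,
    fun hdual hunit => ?_⟩
  · rw [abs_div, abs_neg, abs_of_pos hlam, div_le_one hlam]
    exact abs_le_of_subgradient_abs hlam.le (hsubU i hi)
  · simp only [nllGrad]
    field_simp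
  have hxb0 : ∀ i ∉ U, xb i = 0 := fun i hi => by_contra fun h => hi (hsupp (mem_spt.2 h))
  have hlt : ∀ i ∉ U, |nllGrad S A y xb i| < lam := by
    intro i hi
    have h := hdual i hi
    rwa [show -(1 / (lam * m)) * ∑ j, A j i * (truncMean S (dot (A j) xb) - y j)
        = -(nllGrad S A y xb i / lam) by rw [nllGrad]; ring,
      abs_neg, abs_div, abs_of_pos hlam, div_lt_one hlam] at h
  have hsub : ∀ i w, 0 ≤ nllGrad S A y xb i * (w - xb i) + lam * (|w| - |xb i|) := by
    intro i w
    by_cases hi : i ∈ U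
    · exact hsubU i hi w
    · simpa [hxb0 i hi] using mul_add_mul_abs_nonneg (hlt i hi).le w
  exact ⟨isMinOn_univ_of_subgradient A y hS hS0 hsub,
    fun xhat h => eq_of_objective_le A y hS hS0 hunit hxb0 hsub hlt (isMinOn_iff.1 h xb trivial)⟩
end
end

section
/- Suppose 0 < α ≤ 1 and E_{a~N(0,I_n)}[γ_S(aᵀx*)] ≥ α. Then Pr[ Σ_{j=1}^m log(1/γ_S(A_j x*)) > 2m·log(1/α) ] ≤ α^m, where the probability is over the m i.i.d. truncated-sample rows A_1, …, A_m. -/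
open MeasureTheory ProbabilityTheory Real Filter Topology

noncomputable section

/-!
Conditioning the i.i.d. pairs `(a_j, η_j)` on survival divides by the probability `β^m` that
all `m` of them survive, where `β = E_a[γ_S(aᵀx*)] ≥ α`. The event only constrains the design
`A`; integrating out the noise, its joint probability with survival is `∫_B ∏_j γ_S(A_j x*) dA`
over the set `B` of such designs, and on `B` the product is at most `α^{2m}`. The conditional
probability is therefore at most `α^{2m} / α^m = α^m`.
-/

open scoped NNReal ENNReal

lemma gaussianReal_preimage_const_add (μ : ℝ) (v : ℝ≥0) (t : ℝ) (S : Set ℝ) :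
    gaussianReal μ v ((t + ·) ⁻¹' S) = gaussianReal (μ + t) v S := by
  rw [← gaussianReal_map_const_add, ← MeasurableEquiv.coe_addLeft,
    MeasurableEquiv.map_apply]

lemma measurable_gaussianReal_apply (v : ℝ≥0) {S : Set ℝ} (hS : MeasurableSet S) :
    Measurable fun t => gaussianReal t v S := by
  have hslice : ∀ t, gaussianReal t v S
      = gaussianReal 0 v (Prod.mk t ⁻¹' {p : ℝ × ℝ | p.1 + p.2 ∈ S}) := fun t => by
    rw [← zero_add t, ← gaussianReal_preimage_const_add, zero_add]
    rfl
  simp_rw [hslice]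
  exact measurable_measure_prodMk_left ((measurable_fst.add measurable_snd) hS)

lemma measurable_gammaS {S : Set ℝ} (hS : MeasurableSet S) : Measurable (gammaS S) :=
  (measurable_gaussianReal_apply 1 hS).ennreal_toReal

lemma measurable_dot {n : ℕ} (x : Fin n → ℝ) : Measurable fun a : Fin n → ℝ => dot a x :=
  Finset.measurable_sum _ fun i _ => (measurable_pi_apply i).mul_const _

lemma prod_le_pow_of_lt_sum_log_inv {ι : Type*} [Fintype ι] {α : ℝ} (hα : 0 < α) (k : ℕ)
    {γ : ι → ℝ} (hγ : ∀ i, 0 ≤ γ i) (h : k * log (1 / α) < ∑ i, log (1 / γ i)) :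
    ∏ i, γ i ≤ α ^ k := by
  by_cases hzero : ∃ i, γ i = 0
  · obtain ⟨i, hi⟩ := hzero
    rw [Finset.prod_eq_zero (Finset.mem_univ i) hi]
    positivity
  push Not at hzero
  have hpos : ∀ i, 0 < γ i := fun i => (hγ i).lt_of_ne (hzero i).symm
  simp only [one_div, log_inv, Finset.sum_neg_distrib, mul_neg, neg_lt_neg_iff] at h
  calc ∏ i, γ i = exp (∑ i, log (γ i)) := by
        rw [exp_sum]
        exact Finset.prod_congr rfl fun i _ => (exp_log (hpos i)).symm
    _ ≤ exp (k * log α) := exp_le_exp.2 h.le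
    _ = α ^ k := by rw [exp_nat_mul, exp_log hα]

lemma ENNReal.inv_pow_mul_le_pow {x β p : ℝ≥0∞} (hx0 : x ≠ 0) (hxtop : x ≠ ⊤) (hxβ : x ≤ β)
    (m k : ℕ) (hp : p ≤ x ^ (m + k)) : (β ^ m)⁻¹ * p ≤ x ^ k :=
  calc (β ^ m)⁻¹ * p ≤ (x ^ m)⁻¹ * (x ^ m * x ^ k) := by
        rw [← pow_add]
        gcongr
    _ = x ^ k := by
        rw [← mul_assoc, ENNReal.inv_mul_cancel (pow_ne_zero m hx0) (pow_ne_top hxtop),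
          one_mul]

instance (n : ℕ) : IsProbabilityMeasure (stdGaussianPi n) := by
  unfold stdGaussianPi
  infer_instance

section Samples

variable {n : ℕ} (xstar : Fin n → ℝ) (S : Set ℝ)

def survivalSet : Set ((Fin n → ℝ) × ℝ) := {p | dot p.1 xstar + p.2 ∈ S}

def lowSurvivalDesigns (m : ℕ) (c : ℝ) : Set (Fin m → Fin n → ℝ) :=
  {A | c < ∑ j, log (1 / gammaS S (dot (A j) xstar))}

variable {m : ℕ} {xstar S}

lemma measurableSet_survivalSet (hS : MeasurableSet S) :
    MeasurableSet (survivalSet xstar S) :=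
  (((measurable_dot xstar).comp measurable_fst).add measurable_snd) hS

lemma dataMeasure_eq_cond :
    dataMeasure m n xstar S = (rawMeasure m n)[|Set.univ.pi fun _ => survivalSet xstar S] := by
  rw [dataMeasure]
  congr 1
  ext ω
  simp [survivalSet]

lemma stdGaussianPi_prod_survivalSet (hS : MeasurableSet S) :
    (stdGaussianPi n).prod (gaussianReal 0 1) (survivalSet xstar S)
      = ∫⁻ a, gaussianReal (dot a xstar) 1 S ∂stdGaussianPi n := by
  rw [Measure.prod_apply (measurableSet_survivalSet hS)]
  refine lintegral_congr fun a => ?_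
  exact (gaussianReal_preimage_const_add 0 1 (dot a xstar) S).trans (by rw [zero_add])

lemma ofReal_le_stdGaussianPi_prod_survivalSet {α : ℝ} (hS : MeasurableSet S)
    (hCSP : CSP n xstar S α) :
    ENNReal.ofReal α ≤ (stdGaussianPi n).prod (gaussianReal 0 1) (survivalSet xstar S) := by
  refine ENNReal.ofReal_le_of_le_toReal (hCSP.trans_eq ?_)
  rw [stdGaussianPi_prod_survivalSet hS, ← integral_toReal]
  · rfl
  · exact ((measurable_gaussianReal_apply 1 hS).comp (measurable_dot xstar)).aemeasurable
  · exact ae_of_all _ fun a => measure_lt_top _ _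

lemma rawMeasure_pi_survivalSet :
    rawMeasure m n (Set.univ.pi fun _ => survivalSet xstar S)
      = (stdGaussianPi n).prod (gaussianReal 0 1) (survivalSet xstar S) ^ m := by
  rw [rawMeasure, Measure.pi_pi, Finset.prod_const, Finset.card_univ, Fintype.card_fin]

lemma measurableSet_lowSurvivalDesigns (hS : MeasurableSet S) (c : ℝ) :
    MeasurableSet (lowSurvivalDesigns xstar S m c) :=
  measurableSet_lt measurable_const <| Finset.measurable_sum _ fun j _ =>
    (((measurable_gammaS hS).comp ((measurable_dot xstar).comp (measurable_pi_apply j))).const_div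
      1).log

lemma prod_gaussianReal_le_of_mem_lowSurvivalDesigns {α : ℝ} (hα : 0 < α) (k : ℕ)
    {A : Fin m → Fin n → ℝ} (hA : A ∈ lowSurvivalDesigns xstar S m (k * log (1 / α))) :
    ∏ j, gaussianReal (dot (A j) xstar) 1 S ≤ ENNReal.ofReal (α ^ k) :=
  calc ∏ j, gaussianReal (dot (A j) xstar) 1 S
        = ENNReal.ofReal (∏ j, gammaS S (dot (A j) xstar)) := by
          rw [ENNReal.ofReal_prod_of_nonneg (f := fun j => gammaS S (dot (A j) xstar))
            fun j _ => ENNReal.toReal_nonneg]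
          exact Finset.prod_congr rfl fun j _ => (ENNReal.ofReal_toReal (measure_ne_top _ _)).symm
    _ ≤ ENNReal.ofReal (α ^ k) := ENNReal.ofReal_le_ofReal <|
          prod_le_pow_of_lt_sum_log_inv hα k (fun j => ENNReal.toReal_nonneg) hA

-- Fubini over the noise coordinates: for a fixed design `A` they survive independently.
lemma rawMeasure_pi_survivalSet_inter_mat_preimage (hS : MeasurableSet S)
    {B : Set (Fin m → Fin n → ℝ)} (hB : MeasurableSet B) :
    rawMeasure m n ((Set.univ.pi fun _ => survivalSet xstar S) ∩ mat ⁻¹' B)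
      = ∫⁻ A in B, ∏ j, gaussianReal (dot (A j) xstar) 1 S
          ∂Measure.pi fun _ => stdGaussianPi n := by
  set t : Set ((Fin m → Fin n → ℝ) × (Fin m → ℝ)) :=
    Prod.fst ⁻¹' B ∩ ⋂ j, (fun p => (p.1 j, p.2 j)) ⁻¹' survivalSet xstar S
  have ht : MeasurableSet t := (measurable_fst hB).inter <| MeasurableSet.iInter fun j =>
    (measurableSet_survivalSet hS).preimage (by fun_prop)
  have hpre : MeasurableEquiv.arrowProdEquivProdArrow _ _ _ ⁻¹' t
      = (Set.univ.pi fun _ => survivalSet xstar S) ∩ mat ⁻¹' B := by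
    ext ω
    simp only [t, Set.mem_preimage, Set.mem_inter_iff, Set.mem_iInter, Set.mem_univ_pi]
    exact and_comm
  rw [rawMeasure, ← hpre, (measurePreserving_arrowProdEquivProdArrow _ _ _ _ _).measure_preimage
    ht.nullMeasurableSet, Measure.prod_apply ht, ← lintegral_indicator hB]
  refine lintegral_congr fun A => ?_
  by_cases hA : A ∈ B
  · have hslice : Prod.mk A ⁻¹' t = Set.univ.pi fun j => (dot (A j) xstar + ·) ⁻¹' S := by
      ext η
      simp [t, hA, survivalSet]
    rw [Set.indicator_of_mem hA, hslice, Measure.pi_pi]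
    simp_rw [gaussianReal_preimage_const_add, zero_add]
  · have hslice : Prod.mk A ⁻¹' t = ∅ := by
      ext η
      simp [t, hA]
    rw [Set.indicator_of_notMem hA, hslice, measure_empty]

end Samples

theorem total_survival_bound_general (n m : ℕ) (xstar : Fin n → ℝ) (S : Set ℝ)
    (hS : MeasurableSet S) (α : ℝ) (h0 : 0 < α)
    (hCSP : CSP n xstar S α) :
    dataMeasure m n xstar S
        {ω | 2 * m * Real.log (1 / α)
          < ∑ j, Real.log (1 / gammaS S (dot (mat ω j) xstar))}
      ≤ ENNReal.ofReal (α ^ m) := by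
  set B := lowSurvivalDesigns xstar S m ((m + m : ℕ) * log (1 / α))
  have hB : MeasurableSet B := measurableSet_lowSurvivalDesigns hS _
  have hevent : {ω | 2 * m * Real.log (1 / α)
      < ∑ j, Real.log (1 / gammaS S (dot (mat ω j) xstar))} = mat ⁻¹' B := by
    ext ω
    simp only [B, lowSurvivalDesigns, Set.mem_preimage, Set.mem_ofPred_eq]
    push_cast
    ring_nf
  have hbad : rawMeasure m n ((Set.univ.pi fun _ => survivalSet xstar S) ∩ mat ⁻¹' B)
      ≤ ENNReal.ofReal α ^ (m + m) :=
    calc _ = ∫⁻ A in B, ∏ j, gaussianReal (dot (A j) xstar) 1 S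
            ∂Measure.pi fun _ => stdGaussianPi n :=
          rawMeasure_pi_survivalSet_inter_mat_preimage hS hB
      _ ≤ ∫⁻ _ in B, ENNReal.ofReal (α ^ (m + m)) ∂Measure.pi fun _ => stdGaussianPi n :=
          setLIntegral_mono' hB fun A hA => prod_gaussianReal_le_of_mem_lowSurvivalDesigns h0 _ hA
      _ ≤ ENNReal.ofReal α ^ (m + m) := by
          rw [setLIntegral_const, ENNReal.ofReal_pow h0.le]
          exact mul_le_of_le_one_right' prob_le_one
  rw [hevent, dataMeasure_eq_cond,
    cond_apply (MeasurableSet.univ_pi fun _ => measurableSet_survivalSet hS),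
    rawMeasure_pi_survivalSet, ENNReal.ofReal_pow h0.le]
  exact ENNReal.inv_pow_mul_le_pow (by simpa using h0) ENNReal.ofReal_ne_top
    (ofReal_le_stdGaussianPi_prod_survivalSet hS hCSP) m m hbad

/-- total survival probability bound (Lemma `total-survival`). -/
theorem total_survival_bound (n m : ℕ) (xstar : Fin n → ℝ) (S : Set ℝ)
    (hS : MeasurableSet S) (α : ℝ) (h0 : 0 < α) (h1 : α ≤ 1)
    (hCSP : CSP n xstar S α) :
    dataMeasure m n xstar S
        {ω | 2 * m * Real.log (1 / α)
          < ∑ j, Real.log (1 / gammaS S (dot (mat ω j) xstar))}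
      ≤ ENNReal.ofReal (α ^ m) :=
  total_survival_bound_general n m xstar S hS α h0 hCSP
end
end
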